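/- Let Ω = (U,Ξ) be a unimodular system and Δ_Ω = {w ∈ W_Ω : |ξ_i(w)| ≤ 1 for all i} (equivalently the intersection of W_Ω = Φ(U) with the cube [−1,1]^N). Then Δ_Ω is a lattice polytope with respect to L_Ω = W_Ω ∩ ℤ^N: every vertex of Δ_Ω lies in L_Ω; moreover Δ_Ω is reflexive. -/

import Mathlib

/-- `S` is a maximal linearly independent subset of the family of forms `ξ`. -/
def MaxLinIndep {ι : Type*} {U : Type*} [AddCommGroup U] [Module ℝ U]
    (ξ : ι → Module.Dual ℝ U) (S : Set ι) : Prop :=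
  LinearIndependent ℝ (fun i : S => ξ i) ∧
    ∀ T : Set ι, S ⊆ T → LinearIndependent ℝ (fun i : T => ξ i) → T = S

/-- A unimodular system: nonzero forms spanning `U*` such that every maximal linearly
independent subset generates the same abelian group `M` over `ℤ`. -/
def IsUnimodularSystem {ι : Type*} {U : Type*} [AddCommGroup U] [Module ℝ U]
    (ξ : ι → Module.Dual ℝ U) (M : Submodule ℤ (Module.Dual ℝ U)) : Prop :=
  (∀ k, ξ k ≠ 0) ∧ Submodule.span ℝ (Set.range ξ) = ⊤ ∧
    ∀ S : Set ι, MaxLinIndep ξ S → Submodule.span ℤ (ξ '' S) = M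

/-- The `ℤ`-submodule of integer points of `ι → ℝ`. -/
def intPts (ι : Type*) : Submodule ℤ (ι → ℝ) where
  carrier := {x | ∀ k, ∃ z : ℤ, x k = z}
  zero_mem' := fun k => ⟨0, by simp⟩
  add_mem' := by
    rintro a b ha hb k
    obtain ⟨z, hz⟩ := ha k; obtain ⟨w, hw⟩ := hb k
    exact ⟨z + w, by simp [hz, hw]⟩
  smul_mem' := by
    rintro c a ha k
    obtain ⟨z, hz⟩ := ha k
    exact ⟨c * z, by simp [hz, zsmul_eq_mul]⟩

/-- The evaluation map `Φ : U → ℝᴺ`, `Φ(u) = (ξ₁(u), …, ξ_N(u))`. -/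
noncomputable def PhiMap {N : ℕ} {U : Type*} [AddCommGroup U] [Module ℝ U]
    (ξ : Fin N → Module.Dual ℝ U) : U →ₗ[ℝ] (Fin N → ℝ) :=
  LinearMap.pi fun k => ξ k

/-!
A vertex `u` of `{u | ∀ i, |ξ i u| ≤ 1}` is cut out by its active forms: if the forms with
`ξ i u = ±1` did not span `U*`, a direction killed by all of them could be added and subtracted.
So they contain a maximal linearly independent subset `S`, which generates `M ∋ ξ k` over `ℤ`;
as `ξ i u = ±1` on `S`, every `ξ k u` is an integer.

For reflexivity, the Gram map `w ↦ ∑ ξ i w • ξ i` identifies the polar dual of `Δ` inside `W`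
with the polar of the cube in `U*`, which by Hahn–Banach is the convex hull of `0` and the `±ξ i`.
Its vertices are therefore among `0, ±ξ i`, and these take integer values on lattice points.
-/

open Module Set Filter Topology

section Polar

variable {E : Type*} [AddCommGroup E] [Module ℝ E]

theorem exists_dual_lt_of_notMem_convexHull [FiniteDimensional ℝ E] {s : Set E} (hs : s.Finite)
    {x : E} (hx : x ∉ convexHull ℝ s) :
    ∃ (f : Dual ℝ E) (c : ℝ), (∀ a ∈ s, f a < c) ∧ c < f x := by
  let e := (Module.finBasis ℝ E).equivFun
  have hclosed : IsClosed (convexHull ℝ (e '' s)) :=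
    ((hs.image e).isCompact_convexHull ℝ).isClosed
  have hex : e x ∉ convexHull ℝ (e '' s) := by
    rwa [← LinearEquiv.coe_toLinearMap, ← LinearMap.image_convexHull, LinearEquiv.coe_toLinearMap,
      e.injective.mem_set_image]
  obtain ⟨f, c, hfs, hfx⟩ :=
    geometric_hahn_banach_closed_point (convex_convexHull ℝ _) hclosed hex
  exact ⟨f.toLinearMap ∘ₗ e.toLinearMap, c,
    fun a ha => hfs _ (subset_convexHull ℝ _ (mem_image_of_mem e ha)), hfx⟩

/-- One-sided polar; unlike `LinearMap.polar` it bounds `η u`, not `‖η u‖`. -/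
def dualPolar (C : Set E) : Set (Dual ℝ E) := {η | ∀ u ∈ C, η u ≤ 1}

def predualPolar (K : Set (Dual ℝ E)) : Set E := {u | ∀ κ ∈ K, κ u ≤ 1}

theorem convex_dualPolar (C : Set E) : Convex ℝ (dualPolar C) := by
  simp only [dualPolar, ofPred_forall]
  exact convex_iInter₂ fun u _ => convex_halfSpace_le (Dual.eval ℝ E u).isLinear 1

theorem dualPolar_predualPolar [FiniteDimensional ℝ E] {K : Set (Dual ℝ E)} (hK : K.Finite) :
    dualPolar (predualPolar K) = convexHull ℝ (insert 0 K) := by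
  refine Subset.antisymm (fun η hη => ?_) (convexHull_min ?_ (convex_dualPolar _))
  · by_contra hηK
    obtain ⟨f, c, hfK, hcη⟩ := exists_dual_lt_of_notMem_convexHull (hK.insert 0) hηK
    set w := (evalEquiv ℝ E).symm f
    have hw : ∀ κ : Dual ℝ E, κ w = f κ := fun κ =>
      apply_evalEquiv_symm_apply (R := ℝ) (M := E) κ f
    have hc : 0 < c := by simpa using hfK 0 (mem_insert _ _)
    have hηw : η (c⁻¹ • w) ≤ 1 := hη _ fun κ hκ => by
      rw [map_smul, smul_eq_mul, hw, inv_mul_le_iff₀ hc, mul_one]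
      exact (hfK κ (mem_insert_of_mem _ hκ)).le
    rw [map_smul, smul_eq_mul, hw, inv_mul_le_iff₀ hc, mul_one] at hηw
    linarith
  · rintro η (rfl | hη) u hu
    · simp
    · exact hu η hη

end Polar

theorem extremePoints_image_subset_of_injective {𝕜 E F : Type*} [Semiring 𝕜] [PartialOrder 𝕜]
    [AddCommMonoid E] [Module 𝕜 E] [AddCommMonoid F] [Module 𝕜 F] {f : E →ₗ[𝕜] F}
    (hf : Function.Injective f) (s : Set E) :
    (f '' s).extremePoints 𝕜 ⊆ f '' s.extremePoints 𝕜 := by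
  rintro _ ⟨⟨a, ha, rfl⟩, hext⟩
  refine ⟨a, ⟨ha, fun a₁ ha₁ a₂ ha₂ hseg => hf ?_⟩, rfl⟩
  obtain ⟨p, q, hp, hq, hpq, rfl⟩ := hseg
  exact hext (mem_image_of_mem f ha₁) (mem_image_of_mem f ha₂)
    ⟨p, q, hp, hq, hpq, by rw [map_add, map_smul, map_smul]⟩

theorem Subspace.eq_top_of_forall_apply_eq_zero {K V : Type*} [Field K] [AddCommGroup V]
    [Module K V] [FiniteDimensional K V] {W : Subspace K (Dual K V)}
    (hW : ∀ v : V, (∀ φ ∈ W, φ v = 0) → v = 0) : W = ⊤ := by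
  have hbot : W.dualCoannihilator = ⊥ :=
    (Submodule.eq_bot_iff _).2 fun v hv => hW v ((Submodule.mem_dualCoannihilator v).1 hv)
  rw [← Subspace.dualCoannihilator_dualAnnihilator_eq (W := W), hbot,
    Submodule.dualAnnihilator_bot]

theorem eq_zero_of_forall_apply_eq_zero_of_span_eq_top {ι U : Type*} [AddCommGroup U]
    [Module ℝ U] {ξ : ι → Dual ℝ U} (hξ : Submodule.span ℝ (range ξ) = ⊤) {u : U}
    (hu : ∀ i, ξ i u = 0) : u = 0 := by
  have : u ∈ (Submodule.span ℝ (range ξ)).dualCoannihilator := by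
    rw [← SetLike.mem_coe, Submodule.coe_dualCoannihilator_span]
    rintro _ ⟨i, rfl⟩
    exact hu i
  rwa [hξ, Submodule.dualCoannihilator_top] at this

theorem exists_int_apply_of_mem_span_int {U : Type*} [AddCommGroup U] [Module ℝ U] {u : U}
    {s : Set (Dual ℝ U)} (hs : ∀ η ∈ s, ∃ z : ℤ, η u = z) {η : Dual ℝ U}
    (hη : η ∈ Submodule.span ℤ s) : ∃ z : ℤ, η u = z := by
  induction hη using Submodule.span_induction with
  | mem η hη => exact hs η hη
  | zero => exact ⟨0, by simp⟩
  | add η η' _ _ h h' =>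
    obtain ⟨a, ha⟩ := h
    obtain ⟨b, hb⟩ := h'
    exact ⟨a + b, by simp [ha, hb]⟩
  | smul n η _ h =>
    obtain ⟨a, ha⟩ := h
    exact ⟨n * a, by simp [ha, zsmul_eq_mul]⟩

section Unimodular

variable {ι U : Type*} [AddCommGroup U] [Module ℝ U] {ξ : ι → Dual ℝ U}

theorem maxLinIndep_of_span_eq_top {S : Set ι} (hS : LinearIndepOn ℝ ξ S)
    (hspan : Submodule.span ℝ (ξ '' S) = ⊤) : MaxLinIndep ξ S := by
  refine ⟨hS, fun T hST hT => Subset.antisymm (fun j hjT => ?_) hST⟩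
  by_contra hjS
  have := (linearIndepOn_insert hjS).1 (LinearIndepOn.mono hT (insert_subset hjT hST))
  exact this.2 (hspan ▸ Submodule.mem_top)

theorem exists_maxLinIndep_of_span_eq_top {A T : Set ι}
    (hA : Submodule.span ℝ (ξ '' A) = ⊤) (hTA : T ⊆ A) (hT : LinearIndepOn ℝ ξ T) :
    ∃ S ⊆ A, T ⊆ S ∧ MaxLinIndep ξ S := by
  obtain ⟨S, hSA, hTS, hAS, hS⟩ := exists_linearIndepOn_extension hT hTA
  refine ⟨S, hSA, hTS, maxLinIndep_of_span_eq_top hS (top_unique ?_)⟩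
  rw [← hA]
  exact Submodule.span_le.2 hAS

namespace IsUnimodularSystem

variable {M : Submodule ℤ (Dual ℝ U)}

theorem apply_mem (h : IsUnimodularSystem ξ M) (k : ι) : ξ k ∈ M := by
  obtain ⟨S, -, hkS, hS⟩ := exists_maxLinIndep_of_span_eq_top (by rw [image_univ]; exact h.2.1)
    (subset_univ {k}) ((linearIndepOn_singleton_iff ℝ).2 (h.1 k))
  rw [← h.2.2 S hS]
  exact Submodule.subset_span (mem_image_of_mem ξ (hkS rfl))

theorem exists_span_int_eq (h : IsUnimodularSystem ξ M) {A : Set ι}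
    (hA : Submodule.span ℝ (ξ '' A) = ⊤) :
    ∃ S ⊆ A, Submodule.span ℤ (ξ '' S) = M := by
  obtain ⟨S, hSA, -, hS⟩ := exists_maxLinIndep_of_span_eq_top hA (empty_subset A)
    (linearIndepOn_empty ℝ ξ)
  exact ⟨S, hSA, h.2.2 S hS⟩

end IsUnimodularSystem

end Unimodular

section FormCube

variable {ι U : Type*} [AddCommGroup U] [Module ℝ U] (ξ : ι → Dual ℝ U)

def formCube : Set U := {u | ∀ i, |ξ i u| ≤ 1}

theorem formCube_eq_predualPolar : formCube ξ = predualPolar (range ξ ∪ range (-ξ)) := by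
  ext u
  simp only [formCube, predualPolar, mem_ofPred_eq, mem_union, mem_range, abs_le]
  constructor
  · rintro h κ (⟨i, rfl⟩ | ⟨i, rfl⟩)
    · exact (h i).2
    · simpa using neg_le.1 (h i).1
  · intro h i
    exact ⟨neg_le.1 (by simpa using h (-ξ i) (Or.inr ⟨i, rfl⟩)), h (ξ i) (Or.inl ⟨i, rfl⟩)⟩

variable {ξ}

theorem eventually_add_smul_mem_formCube [Finite ι] {u v : U} (hu : u ∈ formCube ξ)
    (hv : ∀ i, |ξ i u| = 1 → ξ i v = 0) : ∀ᶠ t in 𝓝 (0 : ℝ), u + t • v ∈ formCube ξ := by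
  refine eventually_all.2 fun i => ?_
  simp only [map_add, map_smul, smul_eq_mul]
  rcases (hu i).eq_or_lt with hi | hi
  · simp [hv i hi, hi]
  · have hcont : Continuous fun t : ℝ => |ξ i u + t * ξ i v| := by fun_prop
    exact (hcont.continuousAt.eventually_lt continuousAt_const (by simpa using hi)).mono
      fun _ => le_of_lt

theorem span_image_abs_eq_one_eq_top [Finite ι] [FiniteDimensional ℝ U] {u : U}
    (hu : u ∈ (formCube ξ).extremePoints ℝ) :
    Submodule.span ℝ (ξ '' {i | |ξ i u| = 1}) = ⊤ := by
  refine Subspace.eq_top_of_forall_apply_eq_zero fun v hv => ?_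
  have hmove := eventually_add_smul_mem_formCube hu.1
    fun i hi => hv _ (Submodule.subset_span (mem_image_of_mem ξ hi))
  obtain ⟨ε, hε, hplus, hminus⟩ : ∃ ε : ℝ, 0 < ε ∧ u + ε • v ∈ formCube ξ ∧
      u + (-ε) • v ∈ formCube ξ :=
    (eventually_mem_nhdsWithin.and (nhdsWithin_le_nhds (s := Ioi (0 : ℝ))
      (hmove.and ((continuous_neg.tendsto' 0 0 neg_zero).eventually hmove)))).exists
  have hmid : u ∈ openSegment ℝ (u + (-ε) • v) (u + ε • v) :=
    ⟨1 / 2, 1 / 2, by norm_num, by norm_num, by norm_num, by module⟩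
  have := hu.2 hminus hplus hmid
  rw [add_eq_left, smul_eq_zero] at this
  exact this.resolve_left (neg_ne_zero.2 hε.ne')

theorem IsUnimodularSystem.exists_int_apply_of_mem_extremePoints [Finite ι]
    [FiniteDimensional ℝ U] {M : Submodule ℤ (Dual ℝ U)} (h : IsUnimodularSystem ξ M) {u : U}
    (hu : u ∈ (formCube ξ).extremePoints ℝ) (k : ι) : ∃ z : ℤ, ξ k u = z := by
  obtain ⟨S, hS, hSM⟩ := h.exists_span_int_eq (span_image_abs_eq_one_eq_top hu)
  refine exists_int_apply_of_mem_span_int ?_ (hSM ▸ h.apply_mem k)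
  rintro _ ⟨i, hi, rfl⟩
  rcases (abs_eq zero_le_one).1 (hS hi) with h1 | h1
  · exact ⟨1, by simp [h1]⟩
  · exact ⟨-1, by simp [h1]⟩

theorem extremePoints_dualPolar_formCube_subset [Finite ι] [FiniteDimensional ℝ U] :
    (dualPolar (formCube ξ)).extremePoints ℝ ⊆ insert 0 (range ξ ∪ range (-ξ)) := by
  rw [formCube_eq_predualPolar,
    dualPolar_predualPolar ((finite_range ξ).union (finite_range (-ξ)))]
  exact extremePoints_convexHull_subset

end FormCube

section Gram

variable {ι U : Type*} [Fintype ι] [AddCommGroup U] [Module ℝ U]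

def gram (ξ : ι → Dual ℝ U) : U →ₗ[ℝ] Dual ℝ U := ∑ i, (ξ i).smulRight (ξ i)

theorem gram_apply_apply (ξ : ι → Dual ℝ U) (w u : U) : gram ξ w u = ∑ i, ξ i w * ξ i u := by
  simp [gram, LinearMap.sum_apply]

theorem gram_bijective [FiniteDimensional ℝ U] {ξ : ι → Dual ℝ U}
    (hξ : Submodule.span ℝ (range ξ) = ⊤) : Function.Bijective (gram ξ) := by
  have hinj : Function.Injective (gram ξ) := by
    refine (injective_iff_map_eq_zero _).2 fun w hw => ?_
    have hsq : ∑ i, ξ i w ^ 2 = 0 := by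
      simpa [gram_apply_apply, sq] using LinearMap.congr_fun hw w
    refine eq_zero_of_forall_apply_eq_zero_of_span_eq_top hξ fun i => ?_
    exact pow_eq_zero_iff two_ne_zero |>.1 <|
      (Finset.sum_eq_zero_iff_of_nonneg fun i _ => sq_nonneg _).1 hsq i (Finset.mem_univ i)
  exact ⟨hinj, (LinearMap.injective_iff_surjective_of_finrank_eq_finrank
    Subspace.dual_finrank_eq.symm).1 hinj⟩

end Gram

section PhiMap

variable {N : ℕ} {U : Type*} [AddCommGroup U] [Module ℝ U] {ξ : Fin N → Dual ℝ U}

theorem phiMap_apply (u : U) (k : Fin N) : PhiMap ξ u k = ξ k u := rfl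

theorem phiMap_injective (hξ : Submodule.span ℝ (range ξ) = ⊤) :
    Function.Injective (PhiMap ξ) :=
  (injective_iff_map_eq_zero _).2 fun _ hu =>
    eq_zero_of_forall_apply_eq_zero_of_span_eq_top hξ fun k => congr_fun hu k

theorem sum_phiMap_mul_phiMap (u w : U) :
    ∑ k, PhiMap ξ u k * PhiMap ξ w k = gram ξ w u := by
  simp only [phiMap_apply, gram_apply_apply, mul_comm]

theorem setOf_mem_range_phiMap_abs_le_one :
    {x : Fin N → ℝ | x ∈ LinearMap.range (PhiMap ξ) ∧ ∀ k, |x k| ≤ 1} =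
      PhiMap ξ '' formCube ξ := by
  ext x
  constructor
  · rintro ⟨⟨u, rfl⟩, hu⟩
    exact ⟨u, hu, rfl⟩
  · rintro ⟨u, hu, rfl⟩
    exact ⟨⟨u, rfl⟩, hu⟩

theorem setOf_mem_range_phiMap_polar :
    {y : Fin N → ℝ | y ∈ LinearMap.range (PhiMap ξ) ∧
        ∀ x ∈ PhiMap ξ '' formCube ξ, ∑ k, x k * y k ≤ 1} =
      PhiMap ξ '' (gram ξ ⁻¹' dualPolar (formCube ξ)) := by
  ext y
  constructor
  · rintro ⟨⟨w, rfl⟩, hw⟩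
    refine ⟨w, fun u hu => ?_, rfl⟩
    rw [← sum_phiMap_mul_phiMap]
    exact hw _ (mem_image_of_mem _ hu)
  · rintro ⟨w, hw, rfl⟩
    refine ⟨⟨w, rfl⟩, ?_⟩
    rintro _ ⟨u, hu, rfl⟩
    rw [sum_phiMap_mul_phiMap]
    exact hw u hu

theorem gram_mem_of_mem_extremePoints [FiniteDimensional ℝ U]
    (hξ : Submodule.span ℝ (range ξ) = ⊤) {w : U}
    (hw : w ∈ (gram ξ ⁻¹' dualPolar (formCube ξ)).extremePoints ℝ) :
    gram ξ w ∈ insert 0 (range ξ ∪ range (-ξ)) := by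
  let G := LinearEquiv.ofBijective (gram ξ) (gram_bijective hξ)
  refine extremePoints_dualPolar_formCube_subset ?_
  rw [← image_preimage_eq (dualPolar (formCube ξ)) G.surjective, ← image_extremePoints]
  exact mem_image_of_mem G hw

end PhiMap

/-- The polytope `Δ_Ω = W_Ω ∩ [−1,1]ᴺ` is a lattice polytope for `L_Ω = W_Ω ∩ ℤᴺ`
(every vertex, i.e. extreme point, is a lattice point) and it is reflexive (every vertex
of its polar dual within `W_Ω` pairs integrally with every lattice point). -/
theorem stmt18 {N : ℕ} {U : Type*} [AddCommGroup U] [Module ℝ U] [FiniteDimensional ℝ U]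
    (ξ : Fin N → Module.Dual ℝ U) (M : Submodule ℤ (Module.Dual ℝ U))
    (hsys : IsUnimodularSystem ξ M) :
    (∀ x ∈ Set.extremePoints ℝ
        {x : Fin N → ℝ | x ∈ LinearMap.range (PhiMap ξ) ∧ ∀ k, |x k| ≤ 1},
      ∀ k, ∃ z : ℤ, x k = z) ∧
    (∀ y ∈ Set.extremePoints ℝ
        {y : Fin N → ℝ | y ∈ LinearMap.range (PhiMap ξ) ∧
          ∀ x ∈ {x : Fin N → ℝ | x ∈ LinearMap.range (PhiMap ξ) ∧ ∀ k, |x k| ≤ 1},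
            ∑ k, x k * y k ≤ 1},
      ∀ x : Fin N → ℝ, x ∈ LinearMap.range (PhiMap ξ) → (∀ k, ∃ z : ℤ, x k = z) →
        ∃ z : ℤ, ∑ k, x k * y k = z) := by
  have hΦ := phiMap_injective hsys.2.1
  rw [setOf_mem_range_phiMap_abs_le_one, setOf_mem_range_phiMap_polar]
  constructor
  · rintro x hx k
    obtain ⟨u, hu, rfl⟩ := extremePoints_image_subset_of_injective hΦ _ hx
    exact hsys.exists_int_apply_of_mem_extremePoints hu k
  · rintro y hy _ ⟨u, rfl⟩ hx
    obtain ⟨w, hw, rfl⟩ := extremePoints_image_subset_of_injective hΦ _ hy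
    rw [sum_phiMap_mul_phiMap]
    rcases gram_mem_of_mem_extremePoints hsys.2.1 hw with h0 | ⟨j, hj⟩ | ⟨j, hj⟩
    · exact ⟨0, by simp [h0]⟩
    · rw [← hj]
      exact hx j
    · obtain ⟨z, hz⟩ := hx j
      rw [← hj, Pi.neg_apply, LinearMap.neg_apply, ← phiMap_apply, hz]
      exact ⟨-z, (Int.cast_neg z).symm⟩
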